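/- arXiv:2105.11901 — 2 statements merged into one kernel-verified Lean document; each statement's English description precedes it below -/
import Mathlib

section
/- Let u(ω) solve A(ω;u,v) = F(ω;v) for all v ∈ V, and define U_0 by A_0(U_0,v) = F(ω;v) and recursively U_n by A_0(U_n,v) = F(ω;v) − A_1(ω;U_{n-1},v) for all v ∈ V, where A_1 = A − A_0. If A_0 is coercive with constant λ_0 and ‖A_1(ω)‖_{L(V×V,ℝ)}/λ_0 ≤ ρ < 1, then ‖u(ω) − U_n(ω)‖_V ≤ ρ^{n+1}‖u(ω)‖_V for all n ≥ 0. -/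
/-!
The errors `eₙ = u - Uₙ` satisfy `A₀(eₙ₊₁, ·) = -A₁(ω; eₙ, ·)` and `A₀(e₀, ·) = -A₁(ω; u, ·)`.
Testing such an equation with `eₙ₊₁` itself, coercivity of `A₀` and the bound on `A₁` give
`λ₀ ‖eₙ₊₁‖² ≤ ρ λ₀ ‖eₙ‖ ‖eₙ₊₁‖`, so every step contracts the error by the factor `ρ`.
-/

/-- A bilinear form on a real normed space, phrased via linearity in each slot. -/
def IsBilin {V : Type*} [NormedAddCommGroup V] [NormedSpace ℝ V] (B : V → V → ℝ) : Prop :=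
  (∀ c : ℝ, ∀ u v w, B (c • u + v) w = c * B u w + B v w) ∧
  (∀ c : ℝ, ∀ u v w, B u (c • v + w) = c * B u v + B u w)

namespace IsBilin

variable {V : Type*} [NormedAddCommGroup V] [NormedSpace ℝ V] {B : V → V → ℝ}

lemma zero_left (hB : IsBilin B) (w : V) : B 0 w = 0 := by
  have h := hB.1 1 0 0 w
  rw [one_smul, add_zero, one_mul] at h
  linarith

lemma sub_left (hB : IsBilin B) (x y w : V) : B (x - y) w = B x w - B y w := by
  have h := hB.1 (-1) y x w
  rw [neg_one_smul, neg_add_eq_sub] at h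
  rw [h]
  ring

lemma error_eq {A0 A1 : V → V → ℝ} {F : V → ℝ} {u x y : V} (h0 : IsBilin A0) (h1 : IsBilin A1)
    (hu : ∀ v, A0 u v + A1 u v = F v) (hx : ∀ v, A0 x v = F v - A1 y v) (v : V) :
    A0 (u - x) v = -A1 (u - y) v := by
  rw [h0.sub_left, h1.sub_left, hx, ← hu]
  ring

end IsBilin

lemma norm_le_of_coercive_of_eq_neg {V : Type*} [NormedAddCommGroup V] {A0 A1 : V → V → ℝ}
    {lam0 ρ : ℝ} (hlam0 : 0 < lam0) (hρ : 0 ≤ ρ) (hcoer : ∀ v, lam0 * ‖v‖ ^ 2 ≤ A0 v v)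
    (hA1bdd : ∀ v w, |A1 v w| ≤ ρ * lam0 * ‖v‖ * ‖w‖) {e d : V} (h : ∀ v, A0 e v = -A1 d v) :
    ‖e‖ ≤ ρ * ‖d‖ := by
  have htest : lam0 * ‖e‖ ^ 2 ≤ lam0 * (ρ * ‖d‖) * ‖e‖ :=
    calc lam0 * ‖e‖ ^ 2 ≤ A0 e e := hcoer e
      _ = -A1 d e := h e
      _ ≤ |A1 d e| := neg_le_abs _
      _ ≤ ρ * lam0 * ‖d‖ * ‖e‖ := hA1bdd d e
      _ = lam0 * (ρ * ‖d‖) * ‖e‖ := by ring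
  rcases (norm_nonneg e).eq_or_lt with he | he
  · rw [← he]
    positivity
  · nlinarith [mul_pos hlam0 he]

theorem stmt1_general {V Ω : Type*} [NormedAddCommGroup V] [InnerProductSpace ℝ V]
    (A A1 : Ω → V → V → ℝ) (A0 : V → V → ℝ) (F : Ω → V → ℝ)
    (lam0 ρ : ℝ) (hρ0 : 0 < ρ) (hlam0 : 0 < lam0)
    (hbilin0 : IsBilin A0) (hbilin1 : ∀ ω, IsBilin (A1 ω))
    (hsplit : ∀ ω v w, A ω v w = A0 v w + A1 ω v w)
    (hcoer : ∀ v, lam0 * ‖v‖ ^ 2 ≤ A0 v v)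
    (hA1bdd : ∀ ω v w, |A1 ω v w| ≤ ρ * lam0 * ‖v‖ * ‖w‖)
    (ω : Ω) (u : V) (hu : ∀ v, A ω u v = F ω v)
    (U : ℕ → V)
    (hU0 : ∀ v, A0 (U 0) v = F ω v)
    (hUn : ∀ n : ℕ, ∀ v, A0 (U (n + 1)) v = F ω v - A1 ω (U n) v) :
    ∀ n : ℕ, ‖u - U n‖ ≤ ρ ^ (n + 1) * ‖u‖ := by
  have hu' : ∀ v, A0 u v + A1 ω u v = F ω v := fun v => by rw [← hsplit, hu]
  have contract {e d : V} : (∀ v, A0 e v = -A1 ω d v) → ‖e‖ ≤ ρ * ‖d‖ :=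
    norm_le_of_coercive_of_eq_neg hlam0 hρ0.le hcoer (hA1bdd ω)
  have hU0' : ∀ v, A0 (U 0) v = F ω v - A1 ω 0 v := fun v => by
    rw [hU0, (hbilin1 ω).zero_left, sub_zero]
  have hbase : ‖u - U 0‖ ≤ ρ * ‖u‖ := by
    simpa only [sub_zero] using contract (hbilin0.error_eq (hbilin1 ω) hu' hU0')
  have hstep : ∀ n, ‖u - U (n + 1)‖ ≤ ρ * ‖u - U n‖ := fun n =>
    contract (hbilin0.error_eq (hbilin1 ω) hu' (hUn n))
  intro n
  calc ‖u - U n‖ ≤ ρ ^ n * ‖u - U 0‖ :=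
        le_geom (u := fun k => ‖u - U k‖) hρ0.le n fun k _ => hstep k
    _ ≤ ρ ^ n * (ρ * ‖u‖) := by gcongr
    _ = ρ ^ (n + 1) * ‖u‖ := by ring

/-- Convergence of the iterative algorithm: with A = A₀ + A₁(ω), A₀ coercive with
constant λ₀ and ‖A₁(ω)‖ ≤ ρ λ₀ with ρ < 1, the iterates satisfy
‖u(ω) − Uₙ(ω)‖ ≤ ρ^{n+1} ‖u(ω)‖. -/
theorem stmt1 {V Ω : Type*} [NormedAddCommGroup V] [InnerProductSpace ℝ V]
    (A A1 : Ω → V → V → ℝ) (A0 : V → V → ℝ) (F : Ω → V → ℝ)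
    (lam0 ρ : ℝ) (hρ0 : 0 < ρ) (hρ1 : ρ < 1) (hlam0 : 0 < lam0)
    (hbilin0 : IsBilin A0) (hbilin1 : ∀ ω, IsBilin (A1 ω))
    (hsplit : ∀ ω v w, A ω v w = A0 v w + A1 ω v w)
    (hcoer : ∀ v, lam0 * ‖v‖ ^ 2 ≤ A0 v v)
    (hA1bdd : ∀ ω v w, |A1 ω v w| ≤ ρ * lam0 * ‖v‖ * ‖w‖)
    (ω : Ω) (u : V) (hu : ∀ v, A ω u v = F ω v)
    (U : ℕ → V)
    (hU0 : ∀ v, A0 (U 0) v = F ω v)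
    (hUn : ∀ n : ℕ, ∀ v, A0 (U (n + 1)) v = F ω v - A1 ω (U n) v) :
    ∀ n : ℕ, ‖u - U n‖ ≤ ρ ^ (n + 1) * ‖u‖ :=
  stmt1_general A A1 A0 F lam0 ρ hρ0 hlam0 hbilin0 hbilin1 hsplit hcoer hA1bdd ω u hu U hU0 hUn
end

section
/- Let V_h ⊂ V be a finite-dimensional subspace. If u_h ∈ V_h solves A(ω;u_h,v_h) = F(ω;v_h) for all v_h ∈ V_h and U_n^h ∈ V_h is generated by the discrete iteration A_0(U_0^h,v_h) = F(ω;v_h), A_0(U_n^h,v_h) = F(ω;v_h) − A_1(ω;U_{n−1}^h,v_h), then under the coercivity of A_0 (constant λ_0) and relative dominance ‖A_1(ω)‖/λ_0 ≤ ρ < 1, one has ‖u_h(ω) − U_n^h(ω)‖_V ≤ ρ^{n+1}‖u_h(ω)‖_V ≤ ρ^{n+1}‖F(ω)‖_{V*}/λ. -/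
/-!
Subtracting the iteration from the Galerkin equation on `V_h` shows that the error
`e_n = u_h - U_n` satisfies `A₀(e_n, v) = -A₁(e_{n-1}, v)` for all `v ∈ V_h`, with `e_{-1} = u_h`.
Testing with `v = e_n`, coercivity of `A₀` and the bound `‖A₁‖ ≤ ρ λ₀` give the contraction
`‖e_n‖ ≤ ρ ‖e_{n-1}‖`, hence `‖e_n‖ ≤ ρ^{n+1} ‖u_h‖`. The bound `‖u_h‖ ≤ ‖F‖ / λ` is the usual
stability estimate obtained by testing the Galerkin equation with `u_h` itself.
-/

lemma le_div_of_mul_sq_le_mul {x y c : ℝ} (hc : 0 < c) (hx : 0 ≤ x) (hy : 0 ≤ y)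
    (h : c * x ^ 2 ≤ y * x) : x ≤ y / c := by
  rw [le_div_iff₀ hc]
  rcases hx.eq_or_lt with rfl | hx
  · simpa using hy
  · exact le_of_mul_le_mul_right (by nlinarith) hx

section BilinearForms

variable {V : Type*} [NormedAddCommGroup V]

lemma norm_le_of_coercive_of_eq_neg_s4 {B₀ B₁ : V → V → ℝ} {c ρ : ℝ} (hc : 0 < c) (hρ : 0 ≤ ρ)
    (hcoer : ∀ v, c * ‖v‖ ^ 2 ≤ B₀ v v) (hbdd : ∀ v w, |B₁ v w| ≤ ρ * c * ‖v‖ * ‖w‖)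
    {e z : V} (h : B₀ e e = -B₁ z e) : ‖e‖ ≤ ρ * ‖z‖ := by
  have hle := le_div_of_mul_sq_le_mul hc (norm_nonneg e) (by positivity : 0 ≤ ρ * c * ‖z‖) <|
    calc c * ‖e‖ ^ 2 ≤ B₀ e e := hcoer e
      _ ≤ |B₁ z e| := h ▸ neg_le_abs _
      _ ≤ ρ * c * ‖z‖ * ‖e‖ := hbdd z e
  rwa [mul_right_comm, mul_div_cancel_right₀ _ hc.ne'] at hle

variable [NormedSpace ℝ V]

lemma IsBilin.sub_left_s4 {B : V → V → ℝ} (h : IsBilin B) (u w v : V) :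
    B (u - w) v = B u v - B w v := by
  have := h.1 (-1) w u v
  rw [neg_one_smul] at this
  rw [sub_eq_neg_add, this]
  ring

lemma norm_le_div_of_coercive (F : V →L[ℝ] ℝ) {B : V → V → ℝ} {c : ℝ} (hc : 0 < c) {u : V}
    (hcoer : c * ‖u‖ ^ 2 ≤ B u u) (hu : B u u = F u) : ‖u‖ ≤ ‖F‖ / c :=
  le_div_of_mul_sq_le_mul hc (norm_nonneg u) (norm_nonneg F) <|
    calc c * ‖u‖ ^ 2 ≤ F u := hu ▸ hcoer
      _ ≤ ‖F‖ * ‖u‖ := (le_abs_self _).trans (F.le_opNorm u)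

lemma initial_error_eq {B₀ B₁ : V → V → ℝ} (h₀ : IsBilin B₀) {u w v : V} {f : ℝ}
    (hu : B₀ u v + B₁ u v = f) (hw : B₀ w v = f) : B₀ (u - w) v = -B₁ u v := by
  rw [h₀.sub_left_s4]
  linarith

lemma error_succ_eq {B₀ B₁ : V → V → ℝ} (h₀ : IsBilin B₀) (h₁ : IsBilin B₁) {u w w' v : V}
    {f : ℝ} (hu : B₀ u v + B₁ u v = f) (hw : B₀ w v = f - B₁ w' v) :
    B₀ (u - w) v = -B₁ (u - w') v := by
  rw [h₀.sub_left_s4, h₁.sub_left_s4]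
  linarith

end BilinearForms

theorem stmt4_general {V Ω : Type*} [NormedAddCommGroup V] [InnerProductSpace ℝ V]
    (A A1 : Ω → V → V → ℝ) (A0 : V → V → ℝ) (F : Ω → V →L[ℝ] ℝ)
    (lam lam0 ρ : ℝ) (hlam : 0 < lam) (hlam0 : 0 < lam0)
    (hρ0 : 0 < ρ)
    (hbilin0 : IsBilin A0) (hbilin1 : ∀ ω, IsBilin (A1 ω))
    (hsplit : ∀ ω v w, A ω v w = A0 v w + A1 ω v w)
    (hcoerA : ∀ ω v, lam * ‖v‖ ^ 2 ≤ A ω v v)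
    (hcoer0 : ∀ v, lam0 * ‖v‖ ^ 2 ≤ A0 v v)
    (hA1bdd : ∀ ω v w, |A1 ω v w| ≤ ρ * lam0 * ‖v‖ * ‖w‖)
    (Vh : Submodule ℝ V) (ω : Ω)
    (uh : V) (huh_mem : uh ∈ Vh) (huh : ∀ v ∈ Vh, A ω uh v = F ω v)
    (U : ℕ → V) (hU_mem : ∀ n, U n ∈ Vh)
    (hU0 : ∀ v ∈ Vh, A0 (U 0) v = F ω v)
    (hUn : ∀ n : ℕ, ∀ v ∈ Vh, A0 (U (n + 1)) v = F ω v - A1 ω (U n) v) :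
    ∀ n : ℕ, ‖uh - U n‖ ≤ ρ ^ (n + 1) * ‖uh‖ ∧
      ρ ^ (n + 1) * ‖uh‖ ≤ ρ ^ (n + 1) * ‖F ω‖ / lam := by
  intro n
  have herr_mem (k : ℕ) : uh - U k ∈ Vh := sub_mem huh_mem (hU_mem k)
  have hsol (v : V) (hv : v ∈ Vh) : A0 uh v + A1 ω uh v = F ω v :=
    (hsplit ω uh v).symm.trans (huh v hv)
  have hcontract {e z : V} : A0 e e = -A1 ω z e → ‖e‖ ≤ ρ * ‖z‖ :=
    norm_le_of_coercive_of_eq_neg_s4 hlam0 hρ0.le hcoer0 (hA1bdd ω)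
  have herr_zero : ‖uh - U 0‖ ≤ ρ * ‖uh‖ :=
    hcontract (initial_error_eq hbilin0 (hsol _ (herr_mem 0)) (hU0 _ (herr_mem 0)))
  have herr_succ (k : ℕ) : ‖uh - U (k + 1)‖ ≤ ρ * ‖uh - U k‖ :=
    hcontract (error_succ_eq hbilin0 (hbilin1 ω) (hsol _ (herr_mem (k + 1)))
      (hUn k _ (herr_mem (k + 1))))
  have hstab : ‖uh‖ ≤ ‖F ω‖ / lam :=
    norm_le_div_of_coercive (F ω) hlam (hcoerA ω uh) (huh uh huh_mem)
  constructor
  · calc ‖uh - U n‖ ≤ ρ ^ n * ‖uh - U 0‖ := le_geom (u := fun k ↦ ‖uh - U k‖) hρ0.le n fun k _ ↦ herr_succ k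
      _ ≤ ρ ^ n * (ρ * ‖uh‖) := by gcongr
      _ = ρ ^ (n + 1) * ‖uh‖ := by ring
  · rw [mul_div_assoc]
    gcongr

/-- Convergence of the discrete iteration on a subspace V_h:
‖u_h(ω) − Uₙʰ(ω)‖ ≤ ρ^{n+1}‖u_h(ω)‖ ≤ ρ^{n+1}‖F(ω)‖/λ. -/
theorem stmt4 {V Ω : Type*} [NormedAddCommGroup V] [InnerProductSpace ℝ V]
    (A A1 : Ω → V → V → ℝ) (A0 : V → V → ℝ) (F : Ω → V →L[ℝ] ℝ)
    (lam lam0 ρ : ℝ) (hlam : 0 < lam) (hlam0 : 0 < lam0)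
    (hρ0 : 0 < ρ) (hρ1 : ρ < 1)
    (hbilin0 : IsBilin A0) (hbilin1 : ∀ ω, IsBilin (A1 ω))
    (hsplit : ∀ ω v w, A ω v w = A0 v w + A1 ω v w)
    (hcoerA : ∀ ω v, lam * ‖v‖ ^ 2 ≤ A ω v v)
    (hcoer0 : ∀ v, lam0 * ‖v‖ ^ 2 ≤ A0 v v)
    (hA1bdd : ∀ ω v w, |A1 ω v w| ≤ ρ * lam0 * ‖v‖ * ‖w‖)
    (Vh : Submodule ℝ V) (ω : Ω)
    (uh : V) (huh_mem : uh ∈ Vh) (huh : ∀ v ∈ Vh, A ω uh v = F ω v)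
    (U : ℕ → V) (hU_mem : ∀ n, U n ∈ Vh)
    (hU0 : ∀ v ∈ Vh, A0 (U 0) v = F ω v)
    (hUn : ∀ n : ℕ, ∀ v ∈ Vh, A0 (U (n + 1)) v = F ω v - A1 ω (U n) v) :
    ∀ n : ℕ, ‖uh - U n‖ ≤ ρ ^ (n + 1) * ‖uh‖ ∧
      ρ ^ (n + 1) * ‖uh‖ ≤ ρ ^ (n + 1) * ‖F ω‖ / lam :=
  stmt4_general A A1 A0 F lam lam0 ρ hlam hlam0 hρ0 hbilin0 hbilin1 hsplit hcoerA hcoer0 hA1bdd Vh ω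
    uh huh_mem huh U hU_mem hU0 hUn
end
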